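/- arXiv:1307.1383 — 2 statements merged into one kernel-verified Lean document; each statement's English description precedes it below -/
import Mathlib

section
/- Let T > 0 and D₁ := {(s₁,t₁,s₂,t₂) : 0 < s₁ < t₁ < s₂ < t₂ < T}. Then the integral over D₁ of ((t₁−s₁)(t₂−s₂)(T − (t₁−s₁) − (t₂−s₂)))^{-1/2} with respect to Lebesgue measure is finite. -/
/-!
In the gaps `a = t₁ - s₁`, `b = t₂ - s₂` the integrand factors as
`a^(-1/2) · (b (T - a - b))^(-1/2)`, and translation invariance of Lebesgue measure turns the
integrals over `t₁` and `t₂` into integrals over `a ∈ (0, T)` and `b ∈ (0, T - a)`. The integral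
`∫₀^M (b (M - b))^(-1/2) db` is bounded independently of `M` (it equals `π`; since
`max (b, M - b) ≥ M / 2` it is at most `(M / 2)^(-1/2) · 4 √M = 4 √2`), so what remains is
`T · ∫₀^T a^(-1/2) da · T < ∞`.
-/

open MeasureTheory Set ENNReal

theorem setLIntegral_Ioo_comp_sub_left (f : ℝ → ℝ≥0∞) (M : ℝ) :
    ∫⁻ x in Ioo 0 M, f (M - x) = ∫⁻ x in Ioo 0 M, f x := by
  have hpre : (fun x : ℝ => M - x) ⁻¹' Ioo 0 M = Ioo 0 M := by simp
  rw [← lintegral_indicator measurableSet_Ioo, ← lintegral_indicator measurableSet_Ioo,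
    ← lintegral_sub_left_eq_self ((Ioo 0 M).indicator f) M]
  refine lintegral_congr fun x => ?_
  rw [← indicator_comp_right, hpre]
  rfl

theorem setLIntegral_Ioo_rpow_neg_half (M : ℝ) :
    ∫⁻ x in Ioo 0 M, ENNReal.ofReal (x ^ (-(1 / 2 : ℝ))) = ENNReal.ofReal (2 * √M) := by
  rcases le_or_gt M 0 with hM | hM
  · simp [Ioo_eq_empty_of_le hM, Real.sqrt_eq_zero'.mpr hM]
  have hint : IntegrableOn (fun x : ℝ => x ^ (-(1 / 2 : ℝ))) (Ioo 0 M) :=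
    (intervalIntegral.integrableOn_Ioo_rpow_iff hM).mpr (by norm_num)
  rw [← ofReal_integral_eq_lintegral_ofReal hint
      ((ae_restrict_mem measurableSet_Ioo).mono fun x hx => Real.rpow_nonneg hx.1.le _)]
  congr 1
  rw [← integral_Ioc_eq_integral_Ioo, ← intervalIntegral.integral_of_le hM.le,
    integral_rpow (Or.inl (by norm_num)), Real.sqrt_eq_rpow, Real.zero_rpow (by norm_num)]
  norm_num
  ring

theorem rpow_neg_half_mul_sub_le {M x : ℝ} (hx : 0 < x) (hxM : x < M) :
    (x * (M - x)) ^ (-(1 / 2 : ℝ)) ≤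
      (M / 2) ^ (-(1 / 2 : ℝ)) * (x ^ (-(1 / 2 : ℝ)) + (M - x) ^ (-(1 / 2 : ℝ))) := by
  have hMx : 0 < M - x := by linarith
  have hx' : 0 ≤ x ^ (-(1 / 2 : ℝ)) := Real.rpow_nonneg hx.le _
  have hMx' : 0 ≤ (M - x) ^ (-(1 / 2 : ℝ)) := Real.rpow_nonneg hMx.le _
  rw [Real.mul_rpow hx.le hMx.le, mul_add]
  rcases le_total x (M / 2) with hle | hle
  · have : (M - x) ^ (-(1 / 2 : ℝ)) ≤ (M / 2) ^ (-(1 / 2 : ℝ)) :=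
      Real.rpow_le_rpow_of_nonpos (by linarith) (by linarith) (by norm_num)
    nlinarith [mul_le_mul_of_nonneg_left this hx']
  · have : x ^ (-(1 / 2 : ℝ)) ≤ (M / 2) ^ (-(1 / 2 : ℝ)) :=
      Real.rpow_le_rpow_of_nonpos (by linarith) hle (by norm_num)
    nlinarith [mul_le_mul_of_nonneg_left this hMx']

theorem setLIntegral_Ioo_rpow_neg_half_mul_sub_le (M : ℝ) :
    ∫⁻ x in Ioo 0 M, ENNReal.ofReal ((x * (M - x)) ^ (-(1 / 2 : ℝ))) ≤
      ENNReal.ofReal (4 * √2) := by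
  rcases le_or_gt M 0 with hM | hM
  · simp [Ioo_eq_empty_of_le hM]
  set c : ℝ := (M / 2) ^ (-(1 / 2 : ℝ))
  calc ∫⁻ x in Ioo 0 M, ENNReal.ofReal ((x * (M - x)) ^ (-(1 / 2 : ℝ)))
      ≤ ∫⁻ x in Ioo 0 M, ENNReal.ofReal c *
          (ENNReal.ofReal (x ^ (-(1 / 2 : ℝ))) + ENNReal.ofReal ((M - x) ^ (-(1 / 2 : ℝ)))) := by
        refine setLIntegral_mono (by fun_prop) fun x hx => ?_
        rw [← ENNReal.ofReal_add (Real.rpow_nonneg hx.1.le _)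
            (Real.rpow_nonneg (sub_nonneg.2 hx.2.le) _), ← ENNReal.ofReal_mul (by positivity)]
        exact ENNReal.ofReal_le_ofReal (rpow_neg_half_mul_sub_le hx.1 hx.2)
    _ = ENNReal.ofReal (c * (2 * √M + 2 * √M)) := by
        rw [lintegral_const_mul' _ _ ofReal_ne_top, lintegral_add_left (by fun_prop),
          setLIntegral_Ioo_comp_sub_left (fun x => ENNReal.ofReal (x ^ (-(1 / 2 : ℝ)))),
          setLIntegral_Ioo_rpow_neg_half, ← ENNReal.ofReal_add (by positivity) (by positivity),
          ← ENNReal.ofReal_mul (by positivity)]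
    _ = ENNReal.ofReal (4 * √2) := by
        have hc : c = √2 / √M := by
          simp only [c]
          rw [Real.rpow_neg (by positivity), ← Real.sqrt_eq_rpow, Real.sqrt_div hM.le, inv_div]
        have : 0 < √M := Real.sqrt_pos.2 hM
        rw [hc]
        congr 1
        field_simp
        ring

section Iterated

variable {α β γ δ : Type*} [MeasurableSpace α] [MeasurableSpace β] [MeasurableSpace γ]
  [MeasurableSpace δ]

theorem lintegral_prod_prod_prod (μ : Measure α) (ν : Measure β) (ρ : Measure γ) (σ : Measure δ)
    [SFinite ν] [SFinite ρ] [SFinite σ] {f : α × β × γ × δ → ℝ≥0∞} (hf : Measurable f) :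
    ∫⁻ p, f p ∂(μ.prod (ν.prod (ρ.prod σ))) =
      ∫⁻ a, ∫⁻ b, ∫⁻ c, ∫⁻ d, f (a, b, c, d) ∂σ ∂ρ ∂ν ∂μ := by
  rw [lintegral_prod _ hf.aemeasurable]
  refine lintegral_congr fun a => ?_
  have hfa : Measurable fun q : β × γ × δ => f (a, q) := hf.comp measurable_prodMk_left
  rw [lintegral_prod _ hfa.aemeasurable]
  refine lintegral_congr fun b => ?_
  exact lintegral_prod _ (hfa.comp measurable_prodMk_left).aemeasurable

end Iterated

section Translation

variable {G : Type*} [MeasurableSpace G] [AddGroup G] [MeasurableAdd G] {μ : Measure G}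
  [μ.IsAddRightInvariant]

theorem lintegral_lintegral_lintegral_lintegral_sub_le {f g h : G → ℝ≥0∞} {k : G → G → ℝ≥0∞}
    (hf : Measurable f) (hg : Measurable g) (hh : Measurable h) (hk : ∀ a, Measurable (k a))
    {C : ℝ≥0∞} (hkC : ∀ a, ∫⁻ b, k a b ∂μ ≤ C) :
    ∫⁻ s₁, ∫⁻ t₁, ∫⁻ s₂, ∫⁻ t₂, f s₁ * g (t₁ - s₁) * h s₂ * k (t₁ - s₁) (t₂ - s₂) ∂μ ∂μ ∂μ ∂μ ≤
      (∫⁻ x, f x ∂μ) * (∫⁻ x, g x ∂μ) * (∫⁻ x, h x ∂μ) * C := by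
  have hg' (s : G) : Measurable fun t => g (t - s) := hg.comp (measurable_sub_const' s)
  have hk' (a s : G) : Measurable fun t => k a (t - s) := (hk a).comp (measurable_sub_const' s)
  calc _ ≤ ∫⁻ s₁, ∫⁻ t₁, ∫⁻ s₂, f s₁ * g (t₁ - s₁) * h s₂ * C ∂μ ∂μ ∂μ := by
        gcongr with s₁ t₁ s₂
        rw [lintegral_const_mul _ (hk' _ s₂), lintegral_sub_right_eq_self (k (t₁ - s₁))]
        gcongr
        exact hkC _
    _ = ∫⁻ s₁, ∫⁻ t₁, f s₁ * g (t₁ - s₁) * ((∫⁻ x, h x ∂μ) * C) ∂μ ∂μ := by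
        refine lintegral_congr fun s₁ => lintegral_congr fun t₁ => ?_
        rw [lintegral_mul_const _ (hh.const_mul _), lintegral_const_mul _ hh, mul_assoc]
    _ = ∫⁻ s₁, f s₁ * (∫⁻ x, g x ∂μ) * ((∫⁻ x, h x ∂μ) * C) ∂μ := by
        refine lintegral_congr fun s₁ => ?_
        rw [lintegral_mul_const _ ((hg' s₁).const_mul _), lintegral_const_mul _ (hg' s₁),
          lintegral_sub_right_eq_self g]
    _ = _ := by rw [lintegral_mul_const _ (hf.mul_const _), lintegral_mul_const _ hf]; ring

end Translation

theorem ofReal_rpow_neg_half_gaps_le {T s₁ t₁ s₂ t₂ : ℝ}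
    (h : 0 < s₁ ∧ s₁ < t₁ ∧ t₁ < s₂ ∧ s₂ < t₂ ∧ t₂ < T) :
    ENNReal.ofReal (((t₁ - s₁) * (t₂ - s₂) * (T - (t₁ - s₁) - (t₂ - s₂))) ^ (-(1 / 2 : ℝ))) ≤
      (Ioo 0 T).indicator 1 s₁ *
        (Ioo 0 T).indicator (fun a => ENNReal.ofReal (a ^ (-(1 / 2 : ℝ)))) (t₁ - s₁) *
        (Ioo 0 T).indicator 1 s₂ *
        (Ioo 0 (T - (t₁ - s₁))).indicator
          (fun b => ENNReal.ofReal ((b * (T - (t₁ - s₁) - b)) ^ (-(1 / 2 : ℝ)))) (t₂ - s₂) := by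
  obtain ⟨h₁, h₂, h₃, h₄, h₅⟩ := h
  rw [indicator_of_mem (show s₁ ∈ Ioo 0 T from ⟨h₁, by linarith⟩),
    indicator_of_mem (show t₁ - s₁ ∈ Ioo 0 T from ⟨by linarith, by linarith⟩),
    indicator_of_mem (show s₂ ∈ Ioo 0 T from ⟨by linarith, by linarith⟩),
    indicator_of_mem (show t₂ - s₂ ∈ Ioo 0 (T - (t₁ - s₁)) from ⟨by linarith, by linarith⟩),
    Pi.one_apply, Pi.one_apply, one_mul, mul_one, mul_assoc,
    Real.mul_rpow (by linarith) (mul_nonneg (by linarith) (by linarith)),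
    ENNReal.ofReal_mul (Real.rpow_nonneg (by linarith) _)]

theorem stmt_8_general (T : ℝ) :
    ∫⁻ p in {q : ℝ × ℝ × ℝ × ℝ |
        0 < q.1 ∧ q.1 < q.2.1 ∧ q.2.1 < q.2.2.1 ∧ q.2.2.1 < q.2.2.2 ∧ q.2.2.2 < T},
      ENNReal.ofReal
        (((p.2.1 - p.1) * (p.2.2.2 - p.2.2.1) *
            (T - (p.2.1 - p.1) - (p.2.2.2 - p.2.2.1))) ^ (-(1 / 2 : ℝ))) < ⊤ := by
  have hD : MeasurableSet {q : ℝ × ℝ × ℝ × ℝ |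
      0 < q.1 ∧ q.1 < q.2.1 ∧ q.2.1 < q.2.2.1 ∧ q.2.2.1 < q.2.2.2 ∧ q.2.2.2 < T} := by
    measurability
  rw [← lintegral_indicator hD, Measure.volume_eq_prod, Measure.volume_eq_prod,
    Measure.volume_eq_prod,
    lintegral_prod_prod_prod _ _ _ _ ((by fun_prop : Measurable _).indicator hD)]
  set I : ℝ → ℝ≥0∞ := (Ioo 0 T).indicator 1
  set φ : ℝ → ℝ≥0∞ := (Ioo 0 T).indicator fun a => ENNReal.ofReal (a ^ (-(1 / 2 : ℝ)))
  set ψ : ℝ → ℝ → ℝ≥0∞ := fun a =>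
    (Ioo 0 (T - a)).indicator fun b => ENNReal.ofReal ((b * (T - a - b)) ^ (-(1 / 2 : ℝ)))
  calc _ ≤ ∫⁻ s₁, ∫⁻ t₁, ∫⁻ s₂, ∫⁻ t₂, I s₁ * φ (t₁ - s₁) * I s₂ * ψ (t₁ - s₁) (t₂ - s₂) := by
        gcongr with s₁ t₁ s₂ t₂
        exact indicator_apply_le' (fun h => ofReal_rpow_neg_half_gaps_le h) fun _ => zero_le
    _ ≤ (∫⁻ x, I x) * (∫⁻ x, φ x) * (∫⁻ x, I x) * ENNReal.ofReal (4 * √2) :=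
        lintegral_lintegral_lintegral_lintegral_sub_le
          (measurable_one.indicator measurableSet_Ioo)
          (Measurable.indicator (by fun_prop) measurableSet_Ioo)
          (measurable_one.indicator measurableSet_Ioo)
          (fun _ => Measurable.indicator (by fun_prop) measurableSet_Ioo)
          (fun a => (lintegral_indicator measurableSet_Ioo _).trans_le
            (setLIntegral_Ioo_rpow_neg_half_mul_sub_le (T - a)))
    _ < ⊤ := by
        simp only [I, φ, lintegral_indicator_one measurableSet_Ioo, Real.volume_Ioo,
          lintegral_indicator measurableSet_Ioo, setLIntegral_Ioo_rpow_neg_half]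
        finiteness

/-- For `D₁ = {0 < s₁ < t₁ < s₂ < t₂ < T}`, the integral over `D₁` of
`((t₁-s₁)(t₂-s₂)(T-(t₁-s₁)-(t₂-s₂)))^(-1/2)` is finite. -/
theorem stmt_8 (T : ℝ) (hT : 0 < T) :
    ∫⁻ p in {q : ℝ × ℝ × ℝ × ℝ |
        0 < q.1 ∧ q.1 < q.2.1 ∧ q.2.1 < q.2.2.1 ∧ q.2.2.1 < q.2.2.2 ∧ q.2.2.2 < T},
      ENNReal.ofReal
        (((p.2.1 - p.1) * (p.2.2.2 - p.2.2.1) *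
            (T - (p.2.1 - p.1) - (p.2.2.2 - p.2.2.1))) ^ (-(1 / 2 : ℝ))) < ⊤ :=
  stmt_8_general T
end

section
/- Let T>0 and D₂ := {(s₁,t₁,s₂,t₂) : 0 < s₁ < s₂ < t₁ < t₂ < T}. For (s₁,t₁,s₂,t₂) ∈ D₂ set Q := (t₁−s₁)(t₂−s₂)(T − (t₁−s₁) − (t₂−s₂) + 2(t₁−s₂)) − T(t₁−s₂)². Then Q > 0 on D₂ and ∫_{D₂} Q^{-1/2} ds₁ dt₁ ds₂ dt₂ ≤ 2π²√T · ∫₀^T∫₀^{t₂}∫₀^{t₁}(t₂−s₂)^{-1/2} ds₂ dt₁ dt₂ / (2π√T), i.e. ∫_{D₂} Q^{-1/2} < ∞. -/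
open MeasureTheory Set
open scoped ENNReal

/-!
Write `a = s₂ - s₁`, `m = t₁ - s₂`, `b = t₂ - t₁`. Then
`Q = (T - t₂ + s₁)(am + ab + mb) + amb`, so `Q ≥ s₁ab > 0` on `D₂` and
`Q^(-1/2) ≤ s₁^(-1/2) a^(-1/2) b^(-1/2)`. After the shear `(s₁, t₁, s₂, t₂) ↦ (s₁, t₁, a, b)`,
Tonelli splits the integral of this bound into a product of one-dimensional integrals of
`x^(-1/2)` over `(0, T)` and the length of `(0, T)`.
-/

/-- `T` times the determinant of the covariance matrix of the Brownian-bridge increments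
over `[s₁, t₁]` and `[s₂, t₂]`. -/
def bridgeDet (T s₁ t₁ s₂ t₂ : ℝ) : ℝ :=
  (t₁ - s₁) * (t₂ - s₂) * (T - (t₁ - s₁) - (t₂ - s₂) + 2 * (t₁ - s₂)) - T * (t₁ - s₂) ^ 2

theorem mul_le_bridgeDet {T s₁ t₁ s₂ t₂ : ℝ} (h₀ : 0 ≤ s₁) (h₁ : s₁ ≤ s₂) (h₂ : s₂ ≤ t₁)
    (h₃ : t₁ ≤ t₂) (h₄ : t₂ ≤ T) :
    s₁ * (s₂ - s₁) * (t₂ - t₁) ≤ bridgeDet T s₁ t₁ s₂ t₂ := by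
  have ha : 0 ≤ s₂ - s₁ := sub_nonneg.2 h₁
  have hm : 0 ≤ t₁ - s₂ := sub_nonneg.2 h₂
  have hb : 0 ≤ t₂ - t₁ := sub_nonneg.2 h₃
  have hc : 0 ≤ T - t₂ := sub_nonneg.2 h₄
  unfold bridgeDet
  linear_combination
    mul_nonneg hc (by positivity :
      0 ≤ (s₂ - s₁) * (t₁ - s₂) + (s₂ - s₁) * (t₂ - t₁) + (t₁ - s₂) * (t₂ - t₁)) +
    mul_nonneg h₀ (by positivity : 0 ≤ (s₂ - s₁) * (t₁ - s₂) + (t₁ - s₂) * (t₂ - t₁)) +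
    mul_nonneg (mul_nonneg ha hm) hb

theorem bridgeDet_pos {T s₁ t₁ s₂ t₂ : ℝ} (h₀ : 0 < s₁) (h₁ : s₁ < s₂) (h₂ : s₂ ≤ t₁)
    (h₃ : t₁ < t₂) (h₄ : t₂ ≤ T) : 0 < bridgeDet T s₁ t₁ s₂ t₂ := by
  have ha : 0 < s₂ - s₁ := sub_pos.2 h₁
  have hb : 0 < t₂ - t₁ := sub_pos.2 h₃
  exact (by positivity : 0 < s₁ * (s₂ - s₁) * (t₂ - t₁)).trans_le
    (mul_le_bridgeDet h₀.le h₁.le h₂ h₃.le h₄)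

theorem lintegral_indicator_Ioo_rpow_lt_top {r : ℝ} (hr : -1 < r) (T : ℝ) :
    ∫⁻ x, (Ioo 0 T).indicator (fun x => ENNReal.ofReal (x ^ r)) x < ⊤ := by
  rw [lintegral_indicator measurableSet_Ioo]
  exact ((intervalIntegral.intervalIntegrable_rpow' hr).1.mono_set
    (Ioo_subset_Ioc_self.trans Ioc_subset_uIoc)).lintegral_lt_top

theorem lintegral_const_mul_comp_sub {G : Type*} [MeasurableSpace G] [AddGroup G]
    [MeasurableAdd G] {μ : Measure G} [μ.IsAddRightInvariant] (c : ℝ≥0∞) {k : G → ℝ≥0∞}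
    (hk : Measurable k) (x : G) :
    ∫⁻ y, c * k (y - x) ∂μ = c * ∫⁻ y, k y ∂μ := by
  rw [lintegral_const_mul c (f := fun y => k (y - x)) (hk.comp (measurable_sub_const' x)),
    lintegral_sub_right_eq_self]

theorem lintegral_mul_comp_sub_mul_comp_sub {G : Type*} [MeasureSpace G] [AddGroup G]
    [MeasurableAdd G] [MeasurableSub₂ G] [SFinite (volume : Measure G)]
    [(volume : Measure G).IsAddRightInvariant] {f g h k : G → ℝ≥0∞} (hf : Measurable f)
    (hg : Measurable g) (hh : Measurable h) (hk : Measurable k) :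
    ∫⁻ q : G × G × G × G, f q.1 * g q.2.1 * h (q.2.2.1 - q.1) * k (q.2.2.2 - q.2.1) =
      (∫⁻ x, f x) * (∫⁻ x, g x) * (∫⁻ x, h x) * ∫⁻ x, k x := by
  have inner (s₁ t₁ : G) : ∫⁻ p : G × G, f s₁ * g t₁ * h (p.1 - s₁) * k (p.2 - t₁) =
      f s₁ * g t₁ * (∫⁻ x, h x) * ∫⁻ x, k x := by
    rw [Measure.volume_eq_prod, lintegral_prod _ (by fun_prop)]
    simp only [lintegral_const_mul_comp_sub _ hk]
    rw [lintegral_mul_const _ (by fun_prop), lintegral_const_mul_comp_sub _ hh]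
  have middle (s₁ : G) : ∫⁻ y : G × G × G, f s₁ * g y.1 * h (y.2.1 - s₁) * k (y.2.2 - y.1) =
      f s₁ * (∫⁻ x, g x) * (∫⁻ x, h x) * ∫⁻ x, k x := by
    rw [Measure.volume_eq_prod, lintegral_prod _ (by fun_prop)]
    simp only [inner]
    rw [lintegral_mul_const _ (by fun_prop), lintegral_mul_const _ (by fun_prop),
      lintegral_const_mul _ hg]
  rw [Measure.volume_eq_prod, lintegral_prod _ (by fun_prop)]
  simp only [middle]
  rw [lintegral_mul_const _ (by fun_prop), lintegral_mul_const _ (by fun_prop),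
    lintegral_mul_const _ hf]

theorem ofReal_rpow_le_of_mul_le {x y z w r : ℝ} (hx : 0 < x) (hy : 0 < y) (hz : 0 < z)
    (hw : x * y * z ≤ w) (hr : r ≤ 0) :
    ENNReal.ofReal (w ^ r) ≤
      ENNReal.ofReal (x ^ r) * ENNReal.ofReal (y ^ r) * ENNReal.ofReal (z ^ r) := by
  rw [← ENNReal.ofReal_mul (by positivity), ← ENNReal.ofReal_mul (by positivity),
    ← Real.mul_rpow hx.le hy.le, ← Real.mul_rpow (by positivity) hz.le]
  exact ENNReal.ofReal_le_ofReal (Real.rpow_le_rpow_of_nonpos (by positivity) hw hr)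

theorem ofReal_bridgeDet_rpow_le {T s₁ t₁ s₂ t₂ r : ℝ} (h₀ : 0 < s₁) (h₁ : s₁ < s₂)
    (h₂ : s₂ ≤ t₁) (h₃ : t₁ < t₂) (h₄ : t₂ ≤ T) (hr : r ≤ 0) :
    ENNReal.ofReal (bridgeDet T s₁ t₁ s₂ t₂ ^ r) ≤
      (Ioo 0 T).indicator (fun x => ENNReal.ofReal (x ^ r)) s₁ * (Ioo 0 T).indicator 1 t₁ *
        (Ioo 0 T).indicator (fun x => ENNReal.ofReal (x ^ r)) (s₂ - s₁) *
        (Ioo 0 T).indicator (fun x => ENNReal.ofReal (x ^ r)) (t₂ - t₁) := by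
  have ha : 0 < s₂ - s₁ := sub_pos.2 h₁
  have hb : 0 < t₂ - t₁ := sub_pos.2 h₃
  rw [indicator_of_mem (show s₁ ∈ Ioo 0 T by constructor <;> linarith),
    indicator_of_mem (show t₁ ∈ Ioo 0 T by constructor <;> linarith),
    indicator_of_mem (show s₂ - s₁ ∈ Ioo 0 T by constructor <;> linarith),
    indicator_of_mem (show t₂ - t₁ ∈ Ioo 0 T by constructor <;> linarith), Pi.one_apply, mul_one]
  exact ofReal_rpow_le_of_mul_le h₀ ha hb (mul_le_bridgeDet h₀.le h₁.le h₂ h₃.le h₄) hr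

theorem stmt_18_general (T : ℝ)
    (D₂ : Set (ℝ × ℝ × ℝ × ℝ))
    (hD₂ : D₂ = {q : ℝ × ℝ × ℝ × ℝ |
      0 < q.1 ∧ q.1 < q.2.2.1 ∧ q.2.2.1 < q.2.1 ∧ q.2.1 < q.2.2.2 ∧ q.2.2.2 < T})
    (Q : ℝ × ℝ × ℝ × ℝ → ℝ)
    (hQ : ∀ q : ℝ × ℝ × ℝ × ℝ, Q q =
      (q.2.1 - q.1) * (q.2.2.2 - q.2.2.1) *
          (T - (q.2.1 - q.1) - (q.2.2.2 - q.2.2.1) + 2 * (q.2.1 - q.2.2.1)) -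
        T * (q.2.1 - q.2.2.1) ^ 2) :
    (∀ q ∈ D₂, 0 < Q q) ∧
    ∫⁻ q in D₂, ENNReal.ofReal ((Q q) ^ (-(1 / 2 : ℝ))) < ⊤ := by
  obtain rfl : Q = fun q => bridgeDet T q.1 q.2.1 q.2.2.1 q.2.2.2 := funext hQ
  subst hD₂
  set f : ℝ → ℝ≥0∞ := (Ioo 0 T).indicator fun x => ENNReal.ofReal (x ^ (-(1 / 2 : ℝ)))
  set g : ℝ → ℝ≥0∞ := (Ioo 0 T).indicator 1
  have hf : Measurable f := Measurable.indicator (by fun_prop) measurableSet_Ioo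
  have hg : Measurable g := measurable_const.indicator measurableSet_Ioo
  have hf_lt_top : ∫⁻ x, f x < ⊤ := lintegral_indicator_Ioo_rpow_lt_top (by norm_num) T
  have hg_lt_top : ∫⁻ x, g x < ⊤ := by
    rw [lintegral_indicator_one measurableSet_Ioo]; exact measure_Ioo_lt_top
  constructor
  · rintro q ⟨h₀, h₁, h₂, h₃, h₄⟩
    exact bridgeDet_pos h₀ h₁ h₂.le h₃ h₄.le
  calc _ ≤ ∫⁻ q in _, f q.1 * g q.2.1 * f (q.2.2.1 - q.1) * f (q.2.2.2 - q.2.1) :=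
        setLIntegral_mono (by fun_prop) <| by
          rintro q ⟨h₀, h₁, h₂, h₃, h₄⟩
          exact ofReal_bridgeDet_rpow_le h₀ h₁ h₂.le h₃ h₄.le (by norm_num)
    _ ≤ ∫⁻ q : ℝ × ℝ × ℝ × ℝ, f q.1 * g q.2.1 * f (q.2.2.1 - q.1) * f (q.2.2.2 - q.2.1) :=
        setLIntegral_le_lintegral _ _
    _ = (∫⁻ x, f x) * (∫⁻ x, g x) * (∫⁻ x, f x) * ∫⁻ x, f x :=
        lintegral_mul_comp_sub_mul_comp_sub hf hg hf hf
    _ < ⊤ := by finiteness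

/-- On `D₂ = {0 < s₁ < s₂ < t₁ < t₂ < T}`, the quantity
`Q = (t₁-s₁)(t₂-s₂)(T-(t₁-s₁)-(t₂-s₂)+2(t₁-s₂)) - T(t₁-s₂)²` is positive, and
`∫_{D₂} Q^(-1/2) < ∞`. -/
theorem stmt_18 (T : ℝ) (hT : 0 < T)
    (D₂ : Set (ℝ × ℝ × ℝ × ℝ))
    (hD₂ : D₂ = {q : ℝ × ℝ × ℝ × ℝ |
      0 < q.1 ∧ q.1 < q.2.2.1 ∧ q.2.2.1 < q.2.1 ∧ q.2.1 < q.2.2.2 ∧ q.2.2.2 < T})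
    (Q : ℝ × ℝ × ℝ × ℝ → ℝ)
    (hQ : ∀ q : ℝ × ℝ × ℝ × ℝ, Q q =
      (q.2.1 - q.1) * (q.2.2.2 - q.2.2.1) *
          (T - (q.2.1 - q.1) - (q.2.2.2 - q.2.2.1) + 2 * (q.2.1 - q.2.2.1)) -
        T * (q.2.1 - q.2.2.1) ^ 2) :
    (∀ q ∈ D₂, 0 < Q q) ∧
    ∫⁻ q in D₂, ENNReal.ofReal ((Q q) ^ (-(1 / 2 : ℝ))) < ⊤ :=
  stmt_18_general T D₂ hD₂ Q hQ
end
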